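/- Let A be a finite elementary abelian 2-group, viewed as an F₂-vector space. The map sending a cohomology class η ∈ H²(A, {±1}) (for the trivial action) to the function q_η: A → {±1}, q_η(v) = (lift of v in the corresponding central extension)², is well defined and gives an isomorphism of F₂-vector spaces from H²(A, {±1}) onto the space of {±1}-valued quadratic forms on A (functions q with q(0)=1 whose associated form b(v,w) = q(v+w)q(v)q(w) is bilinear). -/

import Mathlib

/-- `η` is a 2-cocycle on the abelian group `A` with values in `F₂` (trivial action). -/
def IsTwoCocycle {A : Type} [AddCommGroup A] (η : A → A → ZMod 2) : Prop :=
  ∀ a b c : A, η b c + η a (b + c) = η (a + b) c + η a b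

/-- `η` is normalized. -/
def IsNormalized {A : Type} [AddCommGroup A] (η : A → A → ZMod 2) : Prop :=
  ∀ a : A, η 0 a = 0 ∧ η a 0 = 0

/-- `η` is a 2-coboundary: `η(a,b) = γ(b) + γ(a+b) + γ(a)` for some normalized `γ`. -/
def IsTwoCoboundary {A : Type} [AddCommGroup A] (η : A → A → ZMod 2) : Prop :=
  ∃ γ : A → ZMod 2, γ 0 = 0 ∧ ∀ a b : A, η a b = γ b + γ (a + b) + γ a

/-- `q` is an `F₂`-valued quadratic form on `A`: `q(0) = 0` and the polarization
`b(v,w) = q(v+w) + q(v) + q(w)` is bilinear (additivity in the first variable suffices,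
symmetry being automatic). -/
def IsQuadraticFormF2 {A : Type} [AddCommGroup A] (q : A → ZMod 2) : Prop :=
  q 0 = 0 ∧ ∀ v v' w : A,
    (q (v + v' + w) + q (v + v') + q w)
      = (q (v + w) + q v + q w) + (q (v' + w) + q v' + q w)

/-!
The diagonal `v ↦ η(v, v)` of a normalized cocycle has polarization `η(v, w) + η(w, v)`, and the
cocycle identity makes this symmetrization additive, so the diagonal is a quadratic form.
If the diagonal vanishes, `η` is symmetric, so the extension `F₂ × A` with the law twisted by `η`
is abelian of exponent two, i.e. an `F₂`-vector space; a linear section `a ↦ (γ a, a)` of the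
projection then gives `η = δγ`. Conversely every quadratic form is the diagonal of a bilinear
form (take the upper-triangular part of its polar form in a basis), and bilinear forms are
normalized cocycles.
-/

section Cocycle

variable {A : Type} [AddCommGroup A] {η : A → A → ZMod 2}

theorem IsTwoCocycle.symm_add_left (hc : IsTwoCocycle η) (a b c : A) :
    η (a + b) c + η c (a + b) = (η a c + η c a) + (η b c + η c b) := by
  have habc := hc a b c
  have hcab := hc c a b
  have hacb := hc a c b
  rw [add_comm c a] at hcab
  rw [add_comm c b] at hacb
  linear_combination (norm := (ring_nf; reduce_mod_char)) habc + hcab - hacb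

theorem IsTwoCocycle.diag_add (hc : IsTwoCocycle η) (hn : IsNormalized η)
    (h2 : ∀ a : A, a + a = 0) (v w : A) :
    η (v + w) (v + w) + η v v + η w w = η v w + η w v := by
  have hvww := hc v w w
  have hwvw := hc w v w
  have hvwvw := hc v w (v + w)
  rw [h2 w, (hn v).2] at hvww
  rw [add_comm w v] at hwvw
  rw [add_left_comm, h2, add_zero] at hvwvw
  linear_combination (norm := (ring_nf; reduce_mod_char)) hvww + hwvw + hvwvw

theorem IsTwoCocycle.isQuadraticFormF2_diag (hc : IsTwoCocycle η) (hn : IsNormalized η)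
    (h2 : ∀ a : A, a + a = 0) : IsQuadraticFormF2 (fun v => η v v) := by
  refine ⟨(hn 0).1, fun v v' w => ?_⟩
  simp only [hc.diag_add hn h2, hc.symm_add_left]

theorem IsTwoCocycle.symm_of_diag_eq_zero (hc : IsTwoCocycle η) (hn : IsNormalized η)
    (h2 : ∀ a : A, a + a = 0) (hd : ∀ v, η v v = 0) (v w : A) : η v w = η w v := by
  have h := hc.diag_add hn h2 v w
  rw [hd, hd, hd] at h
  linear_combination (norm := (ring_nf; reduce_mod_char)) -h

theorem IsTwoCoboundary.diag_eq_zero (h2 : ∀ a : A, a + a = 0) (h : IsTwoCoboundary η)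
    (v : A) : η v v = 0 := by
  obtain ⟨γ, hγ0, hγ⟩ := h
  rw [hγ, h2, hγ0, add_zero, CharTwo.add_self_eq_zero]

end Cocycle

@[ext]
structure CentralExtension (A : Type) (η : A → A → ZMod 2) where
  c : ZMod 2
  v : A

namespace CentralExtension

variable {A : Type} [AddCommGroup A] {η : A → A → ZMod 2}

instance : Add (CentralExtension A η) := ⟨fun x y => ⟨x.c + y.c + η x.v y.v, x.v + y.v⟩⟩
instance : Zero (CentralExtension A η) := ⟨⟨0, 0⟩⟩
instance : Neg (CentralExtension A η) := ⟨id⟩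

abbrev addCommGroup (hc : IsTwoCocycle η) (hn : IsNormalized η) (h2 : ∀ a : A, a + a = 0)
    (hd : ∀ v, η v v = 0) : AddCommGroup (CentralExtension A η) where
  add_assoc x y z := by
    ext
    · show x.c + y.c + η x.v y.v + z.c + η (x.v + y.v) z.v
        = x.c + (y.c + z.c + η y.v z.v) + η x.v (y.v + z.v)
      linear_combination -hc x.v y.v z.v
    · exact add_assoc x.v y.v z.v
  zero_add x := by
    ext
    · show 0 + x.c + η 0 x.v = x.c
      rw [(hn x.v).1, zero_add, add_zero]
    · exact zero_add x.v
  add_zero x := by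
    ext
    · show x.c + 0 + η x.v 0 = x.c
      rw [(hn x.v).2, add_zero, add_zero]
    · exact add_zero x.v
  nsmul := nsmulRec
  zsmul := zsmulRec
  neg_add_cancel x := by
    ext
    · show x.c + x.c + η x.v x.v = 0
      rw [hd, add_zero, CharTwo.add_self_eq_zero]
    · exact h2 x.v
  add_comm x y := by
    ext
    · show x.c + y.c + η x.v y.v = y.c + x.c + η y.v x.v
      rw [hc.symm_of_diag_eq_zero hn h2 hd, add_comm x.c]
    · exact add_comm x.v y.v

end CentralExtension

theorem IsTwoCocycle.isTwoCoboundary_of_diag_eq_zero {A : Type} [AddCommGroup A]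
    {η : A → A → ZMod 2} (hc : IsTwoCocycle η) (hn : IsNormalized η) (h2 : ∀ a : A, a + a = 0)
    (hd : ∀ v, η v v = 0) : IsTwoCoboundary η := by
  let _ : AddCommGroup (CentralExtension A η) := CentralExtension.addCommGroup hc hn h2 hd
  let _ : Module (ZMod 2) A := AddCommGroup.zmodModule (fun a => (two_nsmul a).trans (h2 a))
  let _ : Module (ZMod 2) (CentralExtension A η) :=
    AddCommGroup.zmodModule (fun x => (two_nsmul x).trans (neg_add_cancel x))
  let π : CentralExtension A η →ₗ[ZMod 2] A :=
    (AddMonoidHom.mk' CentralExtension.v fun _ _ => rfl).toZModLinearMap 2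
  obtain ⟨s, hs⟩ := π.exists_rightInverse_of_surjective
    (LinearMap.range_eq_top.2 fun a => ⟨⟨0, a⟩, rfl⟩)
  have hsv (a : A) : (s a).v = a := LinearMap.congr_fun hs a
  refine ⟨fun a => (s a).c, congrArg CentralExtension.c (map_zero s), fun a b => ?_⟩
  have hadd : (s (a + b)).c = (s a).c + (s b).c + η (s a).v (s b).v :=
    congrArg CentralExtension.c (map_add s a b)
  show η a b = (s b).c + (s (a + b)).c + (s a).c
  rw [hadd, hsv, hsv]
  linear_combination (norm := (ring_nf; reduce_mod_char))

theorem ZMod.two_eq_zero_or_eq_one (a : ZMod 2) : a = 0 ∨ a = 1 := by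
  decide +revert

section Bilinear

variable {A : Type} [AddCommGroup A] [Module (ZMod 2) A]

theorem isTwoCocycle_bilinMap (B : LinearMap.BilinMap (ZMod 2) A (ZMod 2)) :
    IsTwoCocycle (fun a b => B a b) := by
  intro a b c
  simp only [map_add, LinearMap.add_apply]
  ring

theorem isNormalized_bilinMap (B : LinearMap.BilinMap (ZMod 2) A (ZMod 2)) :
    IsNormalized (fun a b => B a b) :=
  fun a => ⟨by simp, by simp⟩

def IsQuadraticFormF2.toQuadraticMap {q : A → ZMod 2} (hq : IsQuadraticFormF2 q) :
    QuadraticMap (ZMod 2) A (ZMod 2) :=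
  QuadraticMap.ofPolar q
    (fun a x => by
      rcases ZMod.two_eq_zero_or_eq_one a with rfl | rfl <;> simp [hq.1])
    (fun x x' y => by
      simp only [QuadraticMap.polar, CharTwo.sub_eq_add]
      exact hq.2 x x' y)
    (fun a x y => by
      rcases ZMod.two_eq_zero_or_eq_one a with rfl | rfl <;> simp [QuadraticMap.polar, hq.1])

theorem IsQuadraticFormF2.exists_bilinMap {q : A → ZMod 2} (hq : IsQuadraticFormF2 q) :
    ∃ B : LinearMap.BilinMap (ZMod 2) A (ZMod 2), ∀ v, B v v = q v := by
  let b := Module.Basis.ofVectorSpace (ZMod 2) A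
  let _ := IsWellOrder.linearOrder
    (WellOrderingRel (α := Module.Basis.ofVectorSpaceIndex (ZMod 2) A))
  exact ⟨hq.toQuadraticMap.toBilin b, fun v =>
    congrArg (· v) (QuadraticMap.toQuadraticMap_toBilin hq.toQuadraticMap b)⟩

end Bilinear

theorem stmt_8_general {A : Type} [AddCommGroup A] (h2 : ∀ a : A, a + a = 0) :
    (∀ η : A → A → ZMod 2, IsTwoCocycle η → IsNormalized η →
      IsQuadraticFormF2 (fun v => η v v)) ∧
    (∀ η η' : A → A → ZMod 2, ∀ v : A,
      (fun v => (η v v + η' v v)) v = (fun v => η v v) v + (fun v => η' v v) v) ∧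
    (∀ η : A → A → ZMod 2, IsTwoCocycle η → IsNormalized η →
      ((∀ v : A, η v v = 0) ↔ IsTwoCoboundary η)) ∧
    (∀ q : A → ZMod 2, IsQuadraticFormF2 q →
      ∃ η : A → A → ZMod 2, IsTwoCocycle η ∧ IsNormalized η ∧ ∀ v, η v v = q v) := by
  let _ : Module (ZMod 2) A := AddCommGroup.zmodModule (fun a => (two_nsmul a).trans (h2 a))
  refine ⟨fun η hc hn => hc.isQuadraticFormF2_diag hn h2, fun _ _ _ => rfl,
    fun η hc hn => ⟨hc.isTwoCoboundary_of_diag_eq_zero hn h2, IsTwoCoboundary.diag_eq_zero h2⟩,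
    fun q hq => ?_⟩
  obtain ⟨B, hB⟩ := hq.exists_bilinMap
  exact ⟨fun a b => B a b, isTwoCocycle_bilinMap B, isNormalized_bilinMap B, hB⟩

/-- For a finite elementary abelian 2-group `A`, the map `η ↦ (v ↦ η(v,v))`
sends normalized 2-cocycles to quadratic forms, is additive, has kernel exactly the
coboundaries, and is surjective onto quadratic forms; i.e. it induces an isomorphism
`H²(A, {±1}) ≅ {quadratic forms on A}`. -/
theorem stmt_8 {A : Type} [AddCommGroup A] [Finite A] (h2 : ∀ a : A, a + a = 0) :
    (∀ η : A → A → ZMod 2, IsTwoCocycle η → IsNormalized η →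
      IsQuadraticFormF2 (fun v => η v v)) ∧
    (∀ η η' : A → A → ZMod 2, ∀ v : A,
      (fun v => (η v v + η' v v)) v = (fun v => η v v) v + (fun v => η' v v) v) ∧
    (∀ η : A → A → ZMod 2, IsTwoCocycle η → IsNormalized η →
      ((∀ v : A, η v v = 0) ↔ IsTwoCoboundary η)) ∧
    (∀ q : A → ZMod 2, IsQuadraticFormF2 q →
      ∃ η : A → A → ZMod 2, IsTwoCocycle η ∧ IsNormalized η ∧ ∀ v, η v v = q v) :=
  stmt_8_general h2
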